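/- Let α ≥ 0, let f ∈ L(α), and let g : Δ → [0,∞] be such that f ≍ g. Then Λ(f)(θ) = Λ(g)(θ) for all θ ∈ (0,1]. -/

import Mathlib

open Metric Set Filter
open scoped ENNReal NNReal

noncomputable section

/-- Least number of closed balls of radius `r` needed to cover `E`. -/
def coveringNumber {X : Type*} [MetricSpace X] (r : ℝ) (E : Set X) : ℕ∞ :=
  sInf {n : ℕ∞ | ∃ s : Finset X, (s.card : ℕ∞) = n ∧ E ⊆ ⋃ x ∈ s, Metric.closedBall x r}

/-- Packing number: the largest cardinality of a subset of `E` whose closed `2r`-balls are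
pairwise disjoint. -/
def packingNumber {X : Type*} [MetricSpace X] (r : ℝ) (E : Set X) : ℕ∞ :=
  sSup {n : ℕ∞ | ∃ s : Finset X, (s.card : ℕ∞) = n ∧ ↑s ⊆ E ∧
    (s : Set X).Pairwise fun x y =>
      Disjoint (Metric.closedBall x (2 * r)) (Metric.closedBall y (2 * r))}

/-- Base-2 logarithm `ℕ∞ → ℝ≥0∞`, clamped below at `0`. -/
def elog2 (n : ℕ∞) : ℝ≥0∞ :=
  if n = ⊤ then ⊤ else ENNReal.ofReal (Real.logb 2 (n.toNat : ℝ))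

/-- The infimal two-scale branching function `β_X(u,v) = log₂ inf_x P_{2^{-u}}(B(x,2^{-v}))`. -/
def brL (X : Type*) [MetricSpace X] (u v : ℝ) : ℝ≥0∞ :=
  elog2 (⨅ x : X, packingNumber ((2 : ℝ) ^ (-u)) (Metric.closedBall x ((2 : ℝ) ^ (-v))))

/-- The supremal two-scale branching function `ν_X(u,v) = log₂ sup_x N_{2^{-u}}(B(x,2^{-v}))`. -/
def brU (X : Type*) [MetricSpace X] (u v : ℝ) : ℝ≥0∞ :=
  elog2 (⨆ x : X, coveringNumber ((2 : ℝ) ^ (-u)) (Metric.closedBall x ((2 : ℝ) ^ (-v))))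

/-- The lower spectrum `dim_L^θ X`, valued in `[0,∞]`. -/
def lowerSpectrum (X : Type*) [MetricSpace X] (θ : ℝ) : ℝ≥0∞ :=
  ⨆ s ∈ {s : ℝ | 0 ≤ s ∧ ∃ C : ℝ, 0 < C ∧ ∀ r : ℝ, 0 < r → r < 1 → ∀ x : X,
      ENNReal.ofReal (C * (r ^ (θ - 1)) ^ s) ≤
        (coveringNumber r (Metric.closedBall x (r ^ θ)) : ℝ≥0∞)},
    ENNReal.ofReal s

/-- The monotone (quasi-) lower spectrum. -/
def monoLowerSpectrum (X : Type*) [MetricSpace X] (θ : ℝ) : ℝ≥0∞ :=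
  ⨆ s ∈ {s : ℝ | 0 ≤ s ∧ ∃ C : ℝ, 0 < C ∧ ∀ r R : ℝ, 0 < r → r ≤ r ^ θ → r ^ θ ≤ R → R < 1 →
      ∀ x : X, ENNReal.ofReal (C * (R / r) ^ s) ≤
        (coveringNumber r (Metric.closedBall x R) : ℝ≥0∞)},
    ENNReal.ofReal s

/-- The class `L(α)`: functions on `Δ = {v ≤ u}` that are nonnegative, vanish on the diagonal,
are superadditive, and are `α`-Lipschitz in the first variable. -/
def MemL (α : ℝ) (f : ℝ → ℝ → ℝ) : Prop :=
  (∀ u v : ℝ, v ≤ u → 0 ≤ f u v) ∧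
  (∀ u : ℝ, f u u = 0) ∧
  (∀ u w v : ℝ, v ≤ w → w ≤ u → f u w + f w v ≤ f u v) ∧
  (∀ v u₁ u₂ : ℝ, v ≤ u₁ → v ≤ u₂ → |f u₁ v - f u₂ v| ≤ α * |u₁ - u₂|)

/-- The class `H(α)`: functions `(0,1] → [0,α]` satisfying (S) and (W). -/
def MemH (α : ℝ) (φ : ℝ → ℝ) : Prop :=
  (∀ θ : ℝ, 0 < θ → θ ≤ 1 → 0 ≤ φ θ ∧ φ θ ≤ α) ∧
  (∀ lam θ : ℝ, 0 < lam → lam ≤ 1 → 0 < θ → θ ≤ 1 → φ θ + θ * φ lam ≤ φ (lam * θ)) ∧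
  (∀ lam θ : ℝ, 0 < lam → lam ≤ 1 → 0 < θ → θ ≤ 1 → φ (lam * θ) ≤ (1 - θ) * α + θ * φ lam)

/-- The class `M(α)`: functions `(0,1] → [0,α]` satisfying (W) and (M). -/
def MemM (α : ℝ) (φ : ℝ → ℝ) : Prop :=
  (∀ θ : ℝ, 0 < θ → θ ≤ 1 → 0 ≤ φ θ ∧ φ θ ≤ α) ∧
  (∀ lam θ : ℝ, 0 < lam → lam ≤ 1 → 0 < θ → θ ≤ 1 → φ (lam * θ) ≤ (1 - θ) * α + θ * φ lam) ∧
  (∀ θ₁ θ₂ : ℝ, 0 < θ₁ → θ₁ ≤ θ₂ → θ₂ < 1 → φ θ₂ / (1 - θ₂) ≤ φ θ₁ / (1 - θ₁))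

/-- The normalized limit `Λ(f)(θ) = liminf_{u→∞} f(u, θu)/u` for real-valued `f`. -/
def Lam (f : ℝ → ℝ → ℝ) (θ : ℝ) : ℝ :=
  Filter.liminf (fun u => f u (θ * u) / u) Filter.atTop

/-- The normalized limit `Λ(g)(θ) = liminf_{u→∞} g(u, θu)/u` for `[0,∞]`-valued `g`. -/
def LamE (g : ℝ → ℝ → ENNReal) (θ : ℝ) : ℝ≥0∞ :=
  Filter.liminf (fun u => g u (θ * u) / ENNReal.ofReal u) Filter.atTop

/-- The two-piece affine function `φ_{α,λ,t}` through `(0,α)`, `(λ,t)` and `(1,0)`. -/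
def phiFun (α lam t : ℝ) : ℝ → ℝ := fun θ =>
  if θ ≤ lam then α + (θ / lam) * (t - α) else t * (1 - θ) / (1 - lam)

/-- The maximal element `h_{g,z}` of `L(α)` agreeing with `g` on the strip `{(u,z) : u ≥ z}`. -/
def hFun (α : ℝ) (g : ℝ → ℝ) (z : ℝ) : ℝ → ℝ → ℝ := fun u v =>
  if z ≤ v then g u - g v else α * (u - v)

/-- A metric space is `η`-uniform if `η(u)/u → 0` and `ν_X ≤ β_X + η(u)` on `Δ`. -/
def IsEtaUniform (η : ℝ → ℝ) (X : Type*) [MetricSpace X] : Prop :=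
  Filter.Tendsto (fun u => η u / u) Filter.atTop (nhds 0) ∧
  ∀ u v : ℝ, v ≤ u → brU X u v ≤ brL X u v + ENNReal.ofReal (η u)

/-- A metric space is uniform if it is `η`-uniform for some `η`. -/
def IsUniform (X : Type*) [MetricSpace X] : Prop := ∃ η : ℝ → ℝ, IsEtaUniform η X

/-- The relation `f ≍ g` between a real-valued and an `[0,∞]`-valued function on `Δ`. -/
def AsympRE (f : ℝ → ℝ → ℝ) (g : ℝ → ℝ → ENNReal) : Prop :=
  ∃ η : ℝ → ℝ, (∀ u : ℝ, 0 ≤ η u) ∧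
    Filter.Tendsto (fun u => η u / u) Filter.atTop (nhds 0) ∧
    ∀ u v : ℝ, 0 ≤ v → v ≤ u →
      (v ≤ u - η u → ENNReal.ofReal (f u (v + η u) - η u) ≤ g u v) ∧
      (η u ≤ v → g u v ≤ ENNReal.ofReal (f u (v - η u) + η u))


/-!
Write `F u = f(u, θu)`, so that `Λ(f)(θ) = liminf F(u)/u`, and let `η` witness `f ≍ g`.
Since `f(·, v)` is `α`-Lipschitz, moving the first variable by `η(u)/θ` absorbs the shift
`θu ± η(u)` of the second one at a cost `O(η(u))`, which is negligible after dividing by `u`.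
This gives `g(u, θu) ≥ F(u + η(u)/θ) - O(η(u))`, hence `Λ(g) ≥ Λ(f)`, because `u + η(u)/θ → ∞`.
For the other inequality a shifted argument is useless (it may miss the `u` along which
`F(u)/u` is small), but superadditivity makes `f(u, ·)` antitone, so
`g(u, θu) ≤ f(u, θ(1-m)u) + η(u) ≤ F((1-m)u) + αmu + η(u)` for a fixed small `m > 0`,
and `u ↦ (1-m)u` reparametrizes `atTop`.
-/

open Asymptotics Topology

theorem isLittleO_id_of_tendsto_div {η : ℝ → ℝ} (hη : Tendsto (fun u => η u / u) atTop (𝓝 0)) :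
    η =o[atTop] id :=
  (isLittleO_iff_tendsto' ((eventually_ne_atTop 0).mono fun _ hu hu0 => absurd hu0 hu)).2 hη

theorem frequently_comp_mul_lt_of_liminf_div_lt {F : ℝ → ℝ}
    (hF : IsBoundedUnder (· ≤ ·) atTop fun t => F t / t) {b c : ℝ} (hc : 0 < c)
    (hb : liminf (fun t => F t / t) atTop < b) : ∃ᶠ u in atTop, F (c * u) < b * (c * u) := by
  have hlt : ∃ᶠ t in atTop, F t < b * t :=
    ((frequently_lt_of_liminf_lt hF.isCoboundedUnder_ge hb).and_eventually
      (eventually_gt_atTop 0)).mono fun t ⟨ht, ht0⟩ => (div_lt_iff₀ ht0).1 ht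
  refine (tendsto_id.atTop_div_const hc).frequently (hlt.mono fun t ht => ?_)
  simpa only [id, mul_div_cancel₀ t hc.ne'] using ht

theorem eventually_sub_mul_le_comp_add_sub {F s e : ℝ → ℝ}
    (hF : IsBoundedUnder (· ≥ ·) atTop fun t => F t / t) (hs0 : ∀ u, 0 ≤ s u)
    (hs : s =o[atTop] id) (he : e =o[atTop] id) {δ : ℝ} (hδ : 0 < δ) :
    ∀ᶠ u in atTop, (liminf (fun t => F t / t) atTop - δ) * u ≤ F (u + s u) - e u := by
  set L := liminf (fun t => F t / t) atTop
  have hshift : Tendsto (fun u => u + s u) atTop atTop :=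
    tendsto_atTop_mono (fun u => le_add_of_nonneg_right (hs0 u)) tendsto_id
  have hlarge : ∀ᶠ t in atTop, (L - δ / 2) * t < F t :=
    ((eventually_lt_of_lt_liminf (by linarith : L - δ / 2 < L) hF).and
      (eventually_gt_atTop 0)).mono fun t ⟨ht, ht0⟩ => (lt_div_iff₀ ht0).1 ht
  have hsmall := ((hs.const_mul_left |L - δ / 2|).add he).def (half_pos hδ)
  filter_upwards [hshift.eventually hlarge, hsmall, eventually_gt_atTop 0] with u hFu hsu hu
  rw [Real.norm_eq_abs, Real.norm_eq_abs, id, abs_of_pos hu] at hsu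
  nlinarith [le_abs_self (|L - δ / 2| * s u + e u),
    mul_le_mul_of_nonneg_right (neg_abs_le (L - δ / 2)) (hs0 u)]

theorem ENNReal.ofReal_le_div_ofReal_iff {a u : ℝ} (hu : 0 < u) {x : ℝ≥0∞} :
    ENNReal.ofReal a ≤ x / ENNReal.ofReal u ↔ ENNReal.ofReal (a * u) ≤ x := by
  rw [ENNReal.le_div_iff_mul_le (.inl (by simpa using hu)) (.inl ENNReal.ofReal_ne_top),
    ENNReal.ofReal_mul' hu.le]

theorem ENNReal.div_ofReal_le_ofReal_iff {a u : ℝ} (hu : 0 < u) {x : ℝ≥0∞} :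
    x / ENNReal.ofReal u ≤ ENNReal.ofReal a ↔ x ≤ ENNReal.ofReal (a * u) := by
  rw [ENNReal.div_le_iff (by simpa using hu) ENNReal.ofReal_ne_top, ENNReal.ofReal_mul' hu.le]

theorem liminf_div_ofReal_le_ofReal {G : ℝ → ℝ≥0∞} {L : ℝ}
    (h : ∀ δ > 0, ∃ᶠ u in atTop, G u ≤ ENNReal.ofReal ((L + δ) * u)) :
    liminf (fun u => G u / ENNReal.ofReal u) atTop ≤ ENNReal.ofReal L := by
  refine ENNReal.le_of_forall_pos_le_add fun ε hε _ => ?_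
  calc liminf (fun u => G u / ENNReal.ofReal u) atTop ≤ ENNReal.ofReal (L + ε) :=
        liminf_le_of_frequently_le' <| ((h ε hε).and_eventually (eventually_gt_atTop 0)).mono
          fun u ⟨hG, hu⟩ => (ENNReal.div_ofReal_le_ofReal_iff hu).2 hG
    _ ≤ ENNReal.ofReal L + ε := by
        simpa only [ENNReal.ofReal_coe_nnreal] using ENNReal.ofReal_add_le (p := L) (q := ε)

theorem ofReal_le_liminf_div_ofReal {G : ℝ → ℝ≥0∞} {L : ℝ}
    (h : ∀ δ > 0, ∀ᶠ u in atTop, ENNReal.ofReal ((L - δ) * u) ≤ G u) :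
    ENNReal.ofReal L ≤ liminf (fun u => G u / ENNReal.ofReal u) atTop := by
  refine ENNReal.le_of_forall_pos_le_add fun ε hε _ => ?_
  calc ENNReal.ofReal L ≤ ENNReal.ofReal (L - ε) + ε := by
        simpa only [sub_add_cancel, ENNReal.ofReal_coe_nnreal] using
          ENNReal.ofReal_add_le (p := L - ε) (q := ε)
    _ ≤ liminf (fun u => G u / ENNReal.ofReal u) atTop + ε := by
        gcongr
        exact le_liminf_of_le (by isBoundedDefault) <| ((h ε hε).and (eventually_gt_atTop 0)).mono
          fun u ⟨hG, hu⟩ => (ENNReal.ofReal_le_div_ofReal_iff hu).2 hG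

namespace MemL

variable {α : ℝ} {f : ℝ → ℝ → ℝ}

theorem antitone_snd (hf : MemL α f) {u v w : ℝ} (hvw : v ≤ w) (hwu : w ≤ u) :
    f u w ≤ f u v := by
  linarith [hf.2.2.1 u w v hvw hwu, hf.1 w v hvw]

theorem apply_le_apply_add (hf : MemL α f) {v u₁ u₂ : ℝ} (h₁ : v ≤ u₁) (h₂ : v ≤ u₂) :
    f u₁ v ≤ f u₂ v + α * |u₁ - u₂| := by
  linarith [(abs_le.1 (hf.2.2.2 v u₁ u₂ h₁ h₂)).2]

theorem const_nonneg (hf : MemL α f) : 0 ≤ α := by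
  simpa using (abs_nonneg _).trans (hf.2.2.2 0 1 0 zero_le_one le_rfl)

theorem apply_le_mul_sub (hf : MemL α f) {u v : ℝ} (hvu : v ≤ u) : f u v ≤ α * (u - v) := by
  simpa [hf.2.1, abs_of_nonneg (sub_nonneg.2 hvu)] using hf.apply_le_apply_add hvu le_rfl

variable {θ : ℝ}

theorem diag_div_mem_Icc (hf : MemL α f) (hθ0 : 0 ≤ θ) (hθ1 : θ ≤ 1) {u : ℝ} (hu : 0 < u) :
    f u (θ * u) / u ∈ Icc 0 α := by
  have hθu : θ * u ≤ u := mul_le_of_le_one_left hu.le hθ1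
  refine ⟨div_nonneg (hf.1 _ _ hθu) hu.le, (div_le_iff₀ hu).2 ?_⟩
  nlinarith [hf.apply_le_mul_sub hθu, hf.const_nonneg, mul_nonneg hθ0 hu.le]

theorem isBoundedUnder_le_diag (hf : MemL α f) (hθ0 : 0 ≤ θ) (hθ1 : θ ≤ 1) :
    IsBoundedUnder (· ≤ ·) atTop fun u => f u (θ * u) / u :=
  isBoundedUnder_of_eventually_le <|
    (eventually_gt_atTop 0).mono fun _ hu => (hf.diag_div_mem_Icc hθ0 hθ1 hu).2

theorem isBoundedUnder_ge_diag (hf : MemL α f) (hθ0 : 0 ≤ θ) (hθ1 : θ ≤ 1) :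
    IsBoundedUnder (· ≥ ·) atTop fun u => f u (θ * u) / u :=
  isBoundedUnder_of_eventually_ge <|
    (eventually_gt_atTop 0).mono fun _ hu => (hf.diag_div_mem_Icc hθ0 hθ1 hu).1

theorem lam_nonneg (hf : MemL α f) (hθ0 : 0 ≤ θ) (hθ1 : θ ≤ 1) : 0 ≤ Lam f θ :=
  le_liminf_of_le (hf.isBoundedUnder_le_diag hθ0 hθ1).isCoboundedUnder_ge <|
    (eventually_gt_atTop 0).mono fun _ hu => (hf.diag_div_mem_Icc hθ0 hθ1 hu).1

theorem apply_sub_le_diag_add (hf : MemL α f) (hθ1 : θ ≤ 1) {c u e : ℝ}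
    (hc0 : 0 ≤ c) (hc1 : c ≤ 1) (hu : 0 ≤ u) (he0 : 0 ≤ e) (he : e ≤ (1 - c) * θ * u) :
    f u (θ * u - e) ≤ f (c * u) (θ * (c * u)) + α * ((1 - c) * u) := by
  have hcu : c * u ≤ u := mul_le_of_le_one_left hu hc1
  have hθcu : θ * (c * u) ≤ c * u := mul_le_of_le_one_left (mul_nonneg hc0 hu) hθ1
  calc f u (θ * u - e) ≤ f u (θ * (c * u)) :=
        hf.antitone_snd (by nlinarith) (by nlinarith [mul_le_of_le_one_left hu hθ1])
    _ ≤ f (c * u) (θ * (c * u)) + α * |u - c * u| :=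
        hf.apply_le_apply_add (hθcu.trans hcu) hθcu
    _ = f (c * u) (θ * (c * u)) + α * ((1 - c) * u) := by
        rw [abs_of_nonneg (sub_nonneg.2 hcu)]; ring

theorem diag_sub_le_apply_add (hf : MemL α f) (hθ : 0 < θ) {u e : ℝ} (he0 : 0 ≤ e)
    (hu : θ * u + e ≤ u) :
    f (u + e / θ) (θ * (u + e / θ)) - α * (e / θ) ≤ f u (θ * u + e) := by
  have hshift : θ * (u + e / θ) = θ * u + e := by field_simp
  have hlip := hf.apply_le_apply_add (v := θ * u + e) (u₁ := u + e / θ) (u₂ := u)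
    (by linarith [div_nonneg he0 hθ.le]) hu
  rw [add_sub_cancel_left, abs_of_nonneg (div_nonneg he0 hθ.le)] at hlip
  rw [hshift]
  linarith

end MemL

namespace AsympRE

variable {α θ : ℝ} {f : ℝ → ℝ → ℝ} {g : ℝ → ℝ → ℝ≥0∞}

theorem eventually_ofReal_lam_sub_le (hf : MemL α f) (hfg : AsympRE f g) (hθ0 : 0 < θ)
    (hθ1 : θ ≤ 1) {δ : ℝ} (hδ : 0 < δ) :
    ∀ᶠ u in atTop, ENNReal.ofReal ((Lam f θ - δ) * u) ≤ g u (θ * u) := by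
  obtain ⟨η, hη0, hη, hηg⟩ := hfg
  have hηo := isLittleO_id_of_tendsto_div hη
  have hsub := eventually_sub_mul_le_comp_add_sub (s := fun u => η u / θ)
    (e := fun u => α * (η u / θ) + η u) (hf.isBoundedUnder_ge_diag hθ0.le hθ1)
    (fun u => div_nonneg (hη0 u) hθ0.le)
    ((hηo.const_mul_left θ⁻¹).congr_left fun u => inv_mul_eq_div _ _)
    (((hηo.const_mul_left (α / θ)).add hηo).congr_left fun u => by ring) hδ
  filter_upwards [hsub, eventually_ge_atTop 0] with u hu hu0
  refine (ENNReal.ofReal_le_ofReal hu).trans ?_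
  have hθu : θ * u ≤ u := mul_le_of_le_one_left hu0 hθ1
  by_cases hroom : θ * u + η u ≤ u
  · refine le_trans (ENNReal.ofReal_le_ofReal ?_) ((hηg u _ (by positivity) hθu).1 (by linarith))
    linarith [hf.diag_sub_le_apply_add hθ0 (hη0 u) hroom, mul_div_assoc α (η u) θ]
  · -- `u < θ u + η u` forces `F σ ≤ α (1 - θ) σ ≤ α η u / θ` at `σ = u + η u / θ`,
    -- so the lower bound is nonpositive
    refine le_of_eq_of_le (ENNReal.ofReal_of_nonpos ?_) zero_le
    have hσ0 : 0 ≤ u + η u / θ := add_nonneg hu0 (div_nonneg (hη0 u) hθ0.le)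
    have hσ := hf.apply_le_mul_sub (mul_le_of_le_one_left hσ0 hθ1)
    have hgap : (1 - θ) * (u + η u / θ) ≤ η u / θ := by
      rw [← sub_nonneg]
      have : η u / θ - (1 - θ) * (u + η u / θ) = η u - (1 - θ) * u := by field_simp; ring
      linarith
    nlinarith [hf.const_nonneg, hη0 u, mul_div_assoc α (η u) θ]

theorem frequently_le_ofReal_lam_add (hf : MemL α f) (hfg : AsympRE f g) (hθ0 : 0 < θ)
    (hθ1 : θ ≤ 1) {δ : ℝ} (hδ : 0 < δ) :
    ∃ᶠ u in atTop, g u (θ * u) ≤ ENNReal.ofReal ((Lam f θ + δ) * u) := by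
  obtain ⟨η, hη0, hη, hηg⟩ := hfg
  have hηo := isLittleO_id_of_tendsto_div hη
  have hδ3 : 0 < δ / 3 := by positivity
  have hsmall_m : ∀ᶠ m in 𝓝 (0 : ℝ), α * m < δ / 3 ∧ m < 1 :=
    (((continuous_const_mul α).tendsto' 0 0 (mul_zero α)).eventually_lt_const hδ3).and
      (eventually_lt_nhds one_pos)
  obtain ⟨m, ⟨hαm, hm1⟩, hm0 : 0 < m⟩ :=
    ((hsmall_m.filter_mono nhdsWithin_le_nhds).and (self_mem_nhdsWithin (s := Ioi 0))).exists
  have hfreq := frequently_comp_mul_lt_of_liminf_div_lt (hf.isBoundedUnder_le_diag hθ0.le hθ1)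
    (sub_pos.2 hm1) (lt_add_of_pos_right (Lam f θ) hδ3)
  refine (hfreq.and_eventually (((hηo.def (mul_pos hm0 hθ0)).and (hηo.def hδ3)).and
    (eventually_ge_atTop 0))).mono fun u ⟨hFu, ⟨hηm, hηδ⟩, hu⟩ => ?_
  rw [Real.norm_of_nonneg (hη0 u), id, Real.norm_of_nonneg hu] at hηm hηδ
  have hθu : θ * u ≤ u := mul_le_of_le_one_left hu hθ1
  have hηθ : η u ≤ θ * u := hηm.trans (by nlinarith [mul_nonneg hθ0.le hu])
  refine ((hηg u _ (by positivity) hθu).2 hηθ).trans (ENNReal.ofReal_le_ofReal ?_)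
  have hstep := hf.apply_sub_le_diag_add hθ1 (c := 1 - m) (by linarith) (by linarith) hu (hη0 u)
    (by linarith)
  have hL : 0 ≤ Lam f θ + δ / 3 := by linarith [hf.lam_nonneg hθ0.le hθ1]
  nlinarith [mul_nonneg (mul_nonneg hL hm0.le) hu, mul_le_mul_of_nonneg_right hαm.le hu]

end AsympRE

theorem Lam_eq_of_asymp_general (α : ℝ) (f : ℝ → ℝ → ℝ) (hf : MemL α f)
    (g : ℝ → ℝ → ℝ≥0∞) (hfg : AsympRE f g) :
    ∀ θ : ℝ, 0 < θ → θ ≤ 1 → LamE g θ = ENNReal.ofReal (Lam f θ) := fun _ hθ0 hθ1 =>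
  le_antisymm
    (liminf_div_ofReal_le_ofReal fun _ hδ => hfg.frequently_le_ofReal_lam_add hf hθ0 hθ1 hδ)
    (ofReal_le_liminf_div_ofReal fun _ hδ => hfg.eventually_ofReal_lam_sub_le hf hθ0 hθ1 hδ)

/-- The normalized limit `Λ` is invariant under the relation `≍`. -/
theorem Lam_eq_of_asymp (α : ℝ) (hα : 0 ≤ α) (f : ℝ → ℝ → ℝ) (hf : MemL α f)
    (g : ℝ → ℝ → ℝ≥0∞) (hfg : AsympRE f g) :
    ∀ θ : ℝ, 0 < θ → θ ≤ 1 → LamE g θ = ENNReal.ofReal (Lam f θ) :=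
  Lam_eq_of_asymp_general α f hf g hfg

end
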